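/- Let d ≥ 2 and let μ be the uniform probability measure on the closed Euclidean unit ball of ℝ^d. Fix δ ∈ [0,1), a unit vector b ∈ ℝ^d, and a unit vector w ∈ ℝ^d. Then ∫_{{x : ⟨b, x⟩ ≥ δ}} ⟨w, x⟩² dμ(x) = α + (γ − α) · ⟨w, b⟩², where α := ∫_{{x : x₁ ≥ δ}} x₂² dμ(x) and γ := ∫_{{x : x₁ ≥ δ}} x₁² dμ(x), with x₁, x₂ the first two coordinates of x. -/

import Mathlib

open scoped RealInnerProductSpace
open MeasureTheory

/-!
Write `w = ⟪w, b⟫ b + v` with `v ⊥ b`, so that `‖v‖² = 1 - ⟪w, b⟫²`. The uniform measure on the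
ball is invariant under every linear isometry. The reflection in `vᗮ` preserves the halfspace
`{δ ≤ ⟪b, x⟫}` and flips the sign of `⟪v, x⟫`, so the cross term `⟪b, x⟫ ⟪v, x⟫` integrates to
zero. The coordinate map of an orthonormal basis starting with `b, v / ‖v‖` sends `b, v / ‖v‖` to
the first two standard basis vectors, turning the two remaining integrals into `γ` and `‖v‖² α`.
-/

theorem exists_orthonormalBasis_apply_eq_and_eq_norm_smul {E : Type*} [NormedAddCommGroup E]
    [InnerProductSpace ℝ E] [FiniteDimensional ℝ E] {ι : Type*}
    [Fintype ι] [DecidableEq ι] (hcard : Module.finrank ℝ E = Fintype.card ι) {i j : ι}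
    (hij : i ≠ j) {b v : E} (hb : ‖b‖ = 1) (hbv : ⟪b, v⟫ = 0) :
    ∃ B : OrthonormalBasis ι ℝ E, B i = b ∧ v = ‖v‖ • B j := by
  by_cases hv : v = 0
  · have hon : Orthonormal ℝ (({i} : Set ι).domRestrict fun _ => b) := by
      rw [orthonormal_iff_ite]
      rintro ⟨k, rfl⟩ ⟨l, rfl⟩
      simp [Set.domRestrict_apply, hb]
    obtain ⟨B, hB⟩ := hon.exists_orthonormalBasis_extension_of_card_eq hcard
    exact ⟨B, hB i rfl, by simp [hv]⟩
  · set u := ‖v‖⁻¹ • v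
    have hu : ‖u‖ = 1 := norm_smul_inv_norm hv
    have hbu : ⟪b, u⟫ = 0 := by rw [real_inner_smul_right, hbv, mul_zero]
    have hon : Orthonormal ℝ (({i, j} : Set ι).domRestrict fun k => if k = i then b else u) := by
      rw [orthonormal_iff_ite]
      rintro ⟨k, hk⟩ ⟨l, hl⟩
      simp only [Set.mem_insert_iff, Set.mem_singleton_iff] at hk hl
      rcases hk with rfl | rfl <;> rcases hl with rfl | rfl <;>
        simp [Set.domRestrict_apply, hij, hij.symm, hb, hu, hbu, real_inner_comm b u]
    obtain ⟨B, hB⟩ := hon.exists_orthonormalBasis_extension_of_card_eq hcard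
    refine ⟨B, by simpa using hB i (by simp), ?_⟩
    rw [hB j (by simp), if_neg hij.symm, smul_inv_smul₀ (norm_ne_zero_iff.2 hv)]

open ProbabilityTheory in
theorem MeasureTheory.MeasurePreserving.cond {α : Type*} [MeasurableSpace α] {ν : Measure α}
    {f : α → α} {s : Set α} (hf : MeasurePreserving f ν ν) (hf' : MeasurableEmbedding f)
    (hs : f ⁻¹' s = s) : MeasurePreserving f ν[|s] ν[|s] := by
  have h := hf.restrict_preimage_emb hf' s
  rw [hs] at h
  exact h.smul_measure _

open ProbabilityTheory in
theorem integrable_cond_of_isCompact {α : Type*} [TopologicalSpace α] [T2Space α]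
    [MeasurableSpace α] [OpensMeasurableSpace α] {ν : Measure α} [IsFiniteMeasureOnCompacts ν]
    {K : Set α} (hK : IsCompact K) (hK0 : ν K ≠ 0) {f : α → ℝ} (hf : ContinuousOn f K) :
    Integrable f ν[|K] :=
  (hf.integrableOn_compact hK).smul_measure (ENNReal.inv_ne_top.2 hK0)

open ProbabilityTheory in
theorem measurePreserving_cond_closedBall {E : Type*} [NormedAddCommGroup E]
    [InnerProductSpace ℝ E] [FiniteDimensional ℝ E] [MeasurableSpace E] [BorelSpace E]
    (e : E ≃ₗᵢ[ℝ] E) (r : ℝ) :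
    MeasurePreserving e (volume[|Metric.closedBall 0 r]) (volume[|Metric.closedBall 0 r]) :=
  e.measurePreserving.cond e.toHomeomorph.measurableEmbedding (by ext; simp)

section Halfspace

variable {E : Type*} [NormedAddCommGroup E] [InnerProductSpace ℝ E] [MeasurableSpace E]
  [BorelSpace E] {μ : Measure E}

theorem integrable_inner_mul_inner (hsq : Integrable (fun x => ‖x‖ ^ 2) μ) (u v : E) :
    Integrable (fun x => ⟪u, x⟫ * ⟪v, x⟫) μ := by
  refine (hsq.const_mul (‖u‖ * ‖v‖)).mono' (by fun_prop) (Filter.Eventually.of_forall fun x => ?_)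
  rw [norm_mul, Real.norm_eq_abs, Real.norm_eq_abs]
  calc |⟪u, x⟫| * |⟪v, x⟫| ≤ (‖u‖ * ‖x‖) * (‖v‖ * ‖x‖) :=
        mul_le_mul (abs_real_inner_le_norm u x) (abs_real_inner_le_norm v x) (abs_nonneg _)
          (by positivity)
    _ = ‖u‖ * ‖v‖ * ‖x‖ ^ 2 := by ring

theorem setIntegral_halfspace_comp_linearIsometryEquiv {F : Type*} [NormedAddCommGroup F]
    [InnerProductSpace ℝ F] [MeasurableSpace F] [BorelSpace F] {ν : Measure F} (e : E ≃ₗᵢ[ℝ] F)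
    (he : MeasurePreserving e μ ν) (g : ℝ → ℝ → ℝ) (δ : ℝ) (a c : E) :
    ∫ x in {x | δ ≤ ⟪e a, x⟫}, g ⟪e a, x⟫ ⟪e c, x⟫ ∂ν =
      ∫ x in {x | δ ≤ ⟪a, x⟫}, g ⟪a, x⟫ ⟪c, x⟫ ∂μ := by
  have h := he.setIntegral_preimage_emb e.toHomeomorph.measurableEmbedding
    (fun y => g ⟪e a, y⟫ ⟪e c, y⟫) {y | δ ≤ ⟪e a, y⟫}
  simp only [Set.preimage_ofPred_eq, LinearIsometryEquiv.inner_map_map] at h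
  exact h.symm

theorem setIntegral_halfspace_inner_mul_inner_eq_zero [CompleteSpace E]
    (hμ : ∀ e : E ≃ₗᵢ[ℝ] E, MeasurePreserving e μ μ) {b v : E}
    (hbv : ⟪b, v⟫ = 0) (δ : ℝ) :
    ∫ x in {x | δ ≤ ⟪b, x⟫}, ⟪b, x⟫ * ⟪v, x⟫ ∂μ = 0 := by
  set R := (ℝ ∙ v)ᗮ.reflection
  have hRb : R b = b := Submodule.reflection_mem_subspace_eq_self
    ((Submodule.mem_orthogonal_singleton_iff_inner_left).2 hbv)
  have hRv : R (-v) = v := by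
    rw [map_neg, Submodule.reflection_orthogonalComplement_singleton_eq_neg, neg_neg]
  have h := setIntegral_halfspace_comp_linearIsometryEquiv R (hμ R) (· * ·) δ b (-v)
  simp only [hRb, hRv, inner_neg_left, mul_neg, integral_neg] at h
  linarith

theorem setIntegral_halfspace_inner_add_smul_sq [CompleteSpace E]
    (hμ : ∀ e : E ≃ₗᵢ[ℝ] E, MeasurePreserving e μ μ) (hsq : Integrable (fun x => ‖x‖ ^ 2) μ)
    {b u : E} (hbu : ⟪b, u⟫ = 0) (c s δ : ℝ) :
    ∫ x in {x | δ ≤ ⟪b, x⟫}, ⟪c • b + s • u, x⟫ ^ 2 ∂μ =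
      c ^ 2 * ∫ x in {x | δ ≤ ⟪b, x⟫}, ⟪b, x⟫ ^ 2 ∂μ +
        s ^ 2 * ∫ x in {x | δ ≤ ⟪b, x⟫}, ⟪u, x⟫ ^ 2 ∂μ := by
  set S := {x | δ ≤ ⟪b, x⟫}
  have hbb_int := (integrable_inner_mul_inner hsq b b).restrict (s := S)
  have hbu_int := (integrable_inner_mul_inner hsq b u).restrict (s := S)
  have huu_int := (integrable_inner_mul_inner hsq u u).restrict (s := S)
  calc ∫ x in S, ⟪c • b + s • u, x⟫ ^ 2 ∂μ
      = ∫ x in S, (c ^ 2 * (⟪b, x⟫ * ⟪b, x⟫) + 2 * c * s * (⟪b, x⟫ * ⟪u, x⟫) +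
          s ^ 2 * (⟪u, x⟫ * ⟪u, x⟫)) ∂μ := by
        congr 1 with x
        rw [inner_add_left, real_inner_smul_left, real_inner_smul_left]
        ring
    _ = c ^ 2 * ∫ x in S, ⟪b, x⟫ ^ 2 ∂μ + s ^ 2 * ∫ x in S, ⟪u, x⟫ ^ 2 ∂μ := by
        rw [integral_add (by fun_prop) (by fun_prop), integral_add (by fun_prop) (by fun_prop),
          integral_const_mul, integral_const_mul, integral_const_mul,
          setIntegral_halfspace_inner_mul_inner_eq_zero hμ hbu δ]
        simp only [sq, mul_zero, add_zero]

theorem setIntegral_halfspace_orthonormalBasis {ι : Type*} [Fintype ι] [DecidableEq ι]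
    {ν : Measure (EuclideanSpace ℝ ι)} (B : OrthonormalBasis ι ℝ E)
    (hB : MeasurePreserving B.repr μ ν) (f : ℝ → ℝ) (δ : ℝ) (i j : ι) :
    ∫ x in {x | δ ≤ ⟪B i, x⟫}, f ⟪B j, x⟫ ∂μ = ∫ x in {x | δ ≤ x i}, f (x j) ∂ν := by
  have h := setIntegral_halfspace_comp_linearIsometryEquiv B.repr hB (fun _ t => f t) δ (B i) (B j)
  simp only [B.repr_self, EuclideanSpace.inner_single_left] at h
  simpa using h.symm

end Halfspace

/-- Second moments of the uniform distribution on the unit ball restricted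
to a halfspace. For unit vectors `b, w`, `δ ∈ [0,1)`, and `μ` the uniform probability
measure on the closed unit ball of `ℝ^d` (`d ≥ 2`),
`∫_{⟨b,x⟩ ≥ δ} ⟨w,x⟩² dμ = α + (γ − α)⟨w,b⟩²` where `α = ∫_{x₁ ≥ δ} x₂² dμ` and
`γ = ∫_{x₁ ≥ δ} x₁² dμ`. -/
theorem restricted_second_moment_identity (d : ℕ) (hd : 2 ≤ d)
    (μ : Measure (EuclideanSpace ℝ (Fin d)))
    (hμ : μ = (volume (Metric.closedBall (0 : EuclideanSpace ℝ (Fin d)) 1))⁻¹ •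
      volume.restrict (Metric.closedBall (0 : EuclideanSpace ℝ (Fin d)) 1))
    (δ : ℝ)
    (b w : EuclideanSpace ℝ (Fin d)) (hb : ‖b‖ = 1) (hw : ‖w‖ = 1) :
    ∫ x in {x : EuclideanSpace ℝ (Fin d) | δ ≤ ⟪b, x⟫}, ⟪w, x⟫ ^ 2 ∂μ =
      (∫ x in {x : EuclideanSpace ℝ (Fin d) | δ ≤ x ⟨0, by omega⟩},
          (x ⟨1, by omega⟩) ^ 2 ∂μ) +
        ((∫ x in {x : EuclideanSpace ℝ (Fin d) | δ ≤ x ⟨0, by omega⟩},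
            (x ⟨0, by omega⟩) ^ 2 ∂μ) -
          (∫ x in {x : EuclideanSpace ℝ (Fin d) | δ ≤ x ⟨0, by omega⟩},
            (x ⟨1, by omega⟩) ^ 2 ∂μ)) * ⟪w, b⟫ ^ 2 := by
  replace hμ : μ = ProbabilityTheory.cond volume (Metric.closedBall 0 1) := hμ
  have hinv (e : EuclideanSpace ℝ (Fin d) ≃ₗᵢ[ℝ] EuclideanSpace ℝ (Fin d)) :
      MeasurePreserving e μ μ := hμ ▸ measurePreserving_cond_closedBall e 1
  have hsq : Integrable (fun x => ‖x‖ ^ 2) μ := hμ ▸ integrable_cond_of_isCompact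
    (isCompact_closedBall 0 1) (Metric.measure_closedBall_pos _ _ one_pos).ne' (by fun_prop)
  set i₀ : Fin d := ⟨0, by omega⟩
  set i₁ : Fin d := ⟨1, by omega⟩
  have hne : i₀ ≠ i₁ := by simp [i₀, i₁]
  set c := ⟪w, b⟫
  set v := w - c • b
  have hbv : ⟪b, v⟫ = 0 := by
    rw [inner_sub_right, real_inner_smul_right, real_inner_self_eq_norm_sq, hb, real_inner_comm]
    ring
  have hwv : w = c • b + v := (add_sub_cancel _ _).symm
  obtain ⟨B, hB0, hB1⟩ := exists_orthonormalBasis_apply_eq_and_eq_norm_smul (by simp)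
    (i := i₀) (j := i₁) hne hb hbv
  have hpyth : c ^ 2 + ‖v‖ ^ 2 = 1 := by
    have h := norm_add_sq_eq_norm_sq_add_norm_sq_real (x := c • b) (y := v)
      (by rw [real_inner_smul_left, hbv, mul_zero])
    rw [← hwv] at h
    simp only [hw, norm_smul, hb, Real.norm_eq_abs, mul_one, abs_mul_abs_self] at h
    linear_combination -h
  have hwB : w = c • B i₀ + ‖v‖ • B i₁ := by
    rw [hB0, ← hB1, ← hwv]
  subst b
  rw [hwB, setIntegral_halfspace_inner_add_smul_sq hinv hsq (B.orthonormal.2 hne),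
    setIntegral_halfspace_orthonormalBasis B (hinv _) (· ^ 2),
    setIntegral_halfspace_orthonormalBasis B (hinv _) (· ^ 2)]
  linear_combination (∫ x in {x : EuclideanSpace ℝ (Fin d) | δ ≤ x i₀}, x i₁ ^ 2 ∂μ) * hpyth
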